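/- arXiv:1601.06284 — 2 statements merged into one kernel-verified Lean document; each statement's English description precedes it below -/
import Mathlib

section
/- Assume f satisfies (f1), (f2) and (f4). Then F(x,t) ≥ 0 for all (x,t) ∈ ℝ^N × ℝ. -/
open MeasureTheory Real Filter Topology
open scoped ENNReal

noncomputable section

/-- `ℝ^N` with its Euclidean structure. -/
abbrev RN (N : ℕ) := EuclideanSpace ℝ (Fin N)

/-- Squared Gagliardo seminorm `[u]² = ∬ |u(x)-u(y)|²/|x-y|^{N+2s} dx dy` (real-valued). -/
def gagSq (N : ℕ) (s : ℝ) (u : RN N → ℝ) : ℝ :=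
  ∫ p : RN N × RN N, (u p.1 - u p.2) ^ 2 / ‖p.1 - p.2‖ ^ ((N : ℝ) + 2 * s)

/-- Squared Gagliardo seminorm, extended-real-valued. -/
def gagSqE (N : ℕ) (s : ℝ) (u : RN N → ℝ) : ℝ≥0∞ :=
  ∫⁻ p : RN N × RN N, ENNReal.ofReal ((u p.1 - u p.2) ^ 2 / ‖p.1 - p.2‖ ^ ((N : ℝ) + 2 * s))

/-- The Gagliardo bilinear form `∬ (u(x)-u(y))(v(x)-v(y))/|x-y|^{N+2s} dx dy`. -/
def gagBilin (N : ℕ) (s : ℝ) (u v : RN N → ℝ) : ℝ :=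
  ∫ p : RN N × RN N, (u p.1 - u p.2) * (v p.1 - v p.2) / ‖p.1 - p.2‖ ^ ((N : ℝ) + 2 * s)

/-- Membership in the fractional Sobolev space `Hˢ(ℝᴺ)`: `u ∈ L²` and `[u] < ∞`. -/
def inHs (N : ℕ) (s : ℝ) (u : RN N → ℝ) : Prop :=
  MemLp u 2 (volume : Measure (RN N)) ∧ gagSqE N s u < ⊤

/-- Squared `Hˢ` norm `‖u‖²_{Hˢ} = [u]² + ‖u‖²_{L²}`. -/
def hsNormSq (N : ℕ) (s : ℝ) (u : RN N → ℝ) : ℝ :=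
  gagSq N s u + ∫ x : RN N, (u x) ^ 2

/-- Squared energy norm `‖u‖² = [u]² + ∫ V u² dx`. -/
def enormSq (N : ℕ) (s : ℝ) (V : RN N → ℝ) (u : RN N → ℝ) : ℝ :=
  gagSq N s u + ∫ x : RN N, V x * (u x) ^ 2

/-- The fractional critical Sobolev exponent `2*_s = 2N/(N-2s)`. -/
def twoStar (N : ℕ) (s : ℝ) : ℝ := 2 * N / (N - 2 * s)

/-- `F(x,t) = ∫₀ᵗ f(x,τ) dτ`. -/
def Fprim (N : ℕ) (f : RN N → ℝ → ℝ) (x : RN N) (t : ℝ) : ℝ := ∫ τ in (0:ℝ)..t, f x τ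

/-- `G(x,t) = f(x,t)t - 2F(x,t)`. -/
def Gfun (N : ℕ) (f : RN N → ℝ → ℝ) (x : RN N) (t : ℝ) : ℝ :=
  f x t * t - 2 * Fprim N f x t

/-- The energy functional `J(u) = ½([u]² + ∫ V u²) - ∫ F(x,u)`. -/
def Jfun (N : ℕ) (s : ℝ) (V : RN N → ℝ) (f : RN N → ℝ → ℝ) (u : RN N → ℝ) : ℝ :=
  (1/2) * enormSq N s V u - ∫ x : RN N, Fprim N f x (u x)

/-- `⟨J'(u), v⟩`. -/
def Jderiv (N : ℕ) (s : ℝ) (V : RN N → ℝ) (f : RN N → ℝ → ℝ) (u v : RN N → ℝ) : ℝ :=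
  gagBilin N s u v + (∫ x : RN N, V x * u x * v x) - ∫ x : RN N, f x (u x) * v x

/-- `u` is a weak critical point of `J`, i.e. a weak solution of `(-Δ)ˢu + Vu = f(x,u)`. -/
def IsCrit (N : ℕ) (s : ℝ) (V : RN N → ℝ) (f : RN N → ℝ → ℝ) (u : RN N → ℝ) : Prop :=
  inHs N s u ∧ ∀ v : RN N → ℝ, inHs N s v →
    gagBilin N s u v + (∫ x : RN N, V x * u x * v x) = ∫ x : RN N, f x (u x) * v x

/-- `u` is nontrivial (nonzero as an element of `Hˢ`, i.e. not a.e. zero). -/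
def Nontriv (N : ℕ) (u : RN N → ℝ) : Prop :=
  ¬ (u =ᵐ[(volume : Measure (RN N))] fun _ => (0:ℝ))

/-- (V1): `V` continuous with `0 < α ≤ V(x) ≤ β`. -/
def CondV1 (N : ℕ) (V : RN N → ℝ) (α β : ℝ) : Prop :=
  Continuous V ∧ 0 < α ∧ α ≤ β ∧ ∀ x : RN N, α ≤ V x ∧ V x ≤ β

/-- 1-periodicity in each coordinate. -/
def PeriodicZN (N : ℕ) (V : RN N → ℝ) : Prop :=
  ∀ (x : RN N) (i : Fin N), V (x + EuclideanSpace.single i 1) = V x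

/-- (f1): `f` continuous, 1-periodic in `x`, and `f(x,t)/|t|^{2*_s-1} → 0` as `|t| → ∞`,
uniformly in `x`. -/
def Condf1 (N : ℕ) (s : ℝ) (f : RN N → ℝ → ℝ) : Prop :=
  Continuous (fun p : RN N × ℝ => f p.1 p.2) ∧
  (∀ (x : RN N) (t : ℝ) (i : Fin N), f (x + EuclideanSpace.single i 1) t = f x t) ∧
  ∀ ε > (0:ℝ), ∃ M > (0:ℝ), ∀ (x : RN N) (t : ℝ), M ≤ |t| →
    |f x t| ≤ ε * |t| ^ (twoStar N s - 1)

/-- (f2): `f(x,t) = o(t)` as `|t| → 0`, uniformly in `x`. -/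
def Condf2 (N : ℕ) (f : RN N → ℝ → ℝ) : Prop :=
  ∀ ε > (0:ℝ), ∃ δ > (0:ℝ), ∀ (x : RN N) (t : ℝ), |t| ≤ δ → |f x t| ≤ ε * |t|

/-- (f3): `F(x,t)/t² → +∞` as `|t| → ∞`, uniformly in `x`. -/
def Condf3 (N : ℕ) (f : RN N → ℝ → ℝ) : Prop :=
  ∀ M : ℝ, ∃ R > (0:ℝ), ∀ (x : RN N) (t : ℝ), R ≤ |t| → M ≤ Fprim N f x t / t ^ 2

/-- (f4): `∃ λ ≥ 1` with `G(x,θt) ≤ λ G(x,t)` for all `x`, `t` and `θ ∈ [0,1]`. -/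
def Condf4 (N : ℕ) (f : RN N → ℝ → ℝ) : Prop :=
  ∃ l : ℝ, 1 ≤ l ∧ ∀ (x : RN N) (t θ : ℝ), θ ∈ Set.Icc (0:ℝ) 1 →
    Gfun N f x (θ * t) ≤ l * Gfun N f x t

/-! (f4) with `θ = 0` gives `0 ≤ λ G(x,t)`, i.e. `G ≥ 0`. Hence `(F/t²)' = G/t³` has the sign
of `t`, so `F/t²` is nondecreasing on `(0, ∞)` and nonincreasing on `(-∞, 0)`. By (f2),
`F(t)/t² → 0` as `t → 0`, hence `F ≥ 0`. -/

section OneVariable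

open Asymptotics Set

variable {g : ℝ → ℝ}

theorem integral_zero_isLittleO_sq (hg : g =o[𝓝 0] id) :
    (fun u => ∫ τ in (0:ℝ)..u, g τ) =o[𝓝 0] fun u => u ^ 2 := by
  rw [isLittleO_iff]
  intro c hc
  obtain ⟨δ, hδ, hsmall⟩ := Metric.eventually_nhds_iff.1 (hg.def hc)
  filter_upwards [Metric.ball_mem_nhds 0 hδ] with u hu
  have hu' : |u| < δ := by simpa using hu
  have hbound : ∀ τ ∈ uIoc 0 u, ‖g τ‖ ≤ c * |u| := fun τ hτ => by
    have hτu : |τ| ≤ |u| := by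
      simpa using abs_sub_left_of_mem_uIcc (uIoc_subset_uIcc hτ)
    calc ‖g τ‖ ≤ c * ‖τ‖ := hsmall (by simpa using hτu.trans_lt hu')
      _ ≤ c * |u| := by rw [Real.norm_eq_abs]; gcongr
  calc ‖∫ τ in (0:ℝ)..u, g τ‖ ≤ c * |u| * |u - 0| :=
        intervalIntegral.norm_integral_le_of_norm_le_const hbound
    _ = c * ‖u ^ 2‖ := by simp [mul_assoc, sq]

theorem hasDerivAt_integral_div_sq (hg : Continuous g) {u : ℝ} (hu : u ≠ 0) :
    HasDerivAt (fun v => (∫ τ in (0:ℝ)..v, g τ) / v ^ 2)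
      ((u * g u - 2 * ∫ τ in (0:ℝ)..u, g τ) / u ^ 3) u := by
  refine ((hg.integral_hasStrictDerivAt 0 u).hasDerivAt.div (hasDerivAt_pow 2 u)
    (pow_ne_zero 2 hu)).congr_deriv ?_
  field_simp
  ring

variable (hg : Continuous g) (hG : ∀ u, 2 * ∫ τ in (0:ℝ)..u, g τ ≤ u * g u)
  (ho : g =o[𝓝 0] id)
include hg hG ho

theorem integral_nonneg_of_two_integral_le_mul_of_pos {t : ℝ} (ht : 0 < t) : 0 ≤ ∫ τ in (0:ℝ)..t, g τ := by
  set h : ℝ → ℝ := fun v => (∫ τ in (0:ℝ)..v, g τ) / v ^ 2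
  have hmono : MonotoneOn h (Ioi 0) := by
    refine monotoneOn_of_hasDerivWithinAt_nonneg (convex_Ioi 0)
      (f' := fun u => (u * g u - 2 * ∫ τ in (0:ℝ)..u, g τ) / u ^ 3) ?_ ?_ ?_
    · exact fun u hu =>
        (hasDerivAt_integral_div_sq hg (ne_of_gt hu)).continuousAt.continuousWithinAt
    · intro u hu
      rw [interior_Ioi] at hu
      exact (hasDerivAt_integral_div_sq hg (ne_of_gt hu)).hasDerivWithinAt
    · intro u hu
      rw [interior_Ioi, mem_Ioi] at hu
      exact div_nonneg (by linarith [hG u]) (by positivity)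
  have hlim : Tendsto h (𝓝[>] 0) (𝓝 0) :=
    (integral_zero_isLittleO_sq ho).tendsto_div_nhds_zero.mono_left nhdsWithin_le_nhds
  have hht : 0 ≤ h t := le_of_tendsto hlim <| by
    filter_upwards [Ioo_mem_nhdsGT ht] with u hu
    exact hmono hu.1 ht hu.2.le
  simpa using (le_div_iff₀ (by positivity)).1 hht

theorem integral_nonneg_of_two_integral_le_mul (t : ℝ) : 0 ≤ ∫ τ in (0:ℝ)..t, g τ := by
  rcases lt_trichotomy t 0 with ht | rfl | ht
  · -- Reflect: `τ ↦ -g (-τ)` satisfies the same hypotheses and has primitive `u ↦ F(-u)`.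
    have hrefl : ∀ u, ∫ τ in (0:ℝ)..u, -g (-τ) = ∫ τ in (0:ℝ)..-u, g τ := fun u => by
      rw [intervalIntegral.integral_neg, intervalIntegral.integral_comp_neg, neg_zero,
        intervalIntegral.integral_symm, neg_neg]
    have ho' : (fun τ => -g (-τ)) =o[𝓝 0] id := by
      have := ho.comp_tendsto (continuous_neg.tendsto' (0:ℝ) 0 neg_zero)
      exact isLittleO_neg_right.1 this.neg_left
    have := integral_nonneg_of_two_integral_le_mul_of_pos (hg.comp continuous_neg).neg
      (fun u => by simpa [hrefl] using hG (-u)) ho' (neg_pos.2 ht)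
    simpa [hrefl] using this
  · simp
  · exact integral_nonneg_of_two_integral_le_mul_of_pos hg hG ho ht

end OneVariable

theorem Gfun_nonneg {N : ℕ} {f : RN N → ℝ → ℝ} (hf4 : Condf4 N f) (x : RN N) (t : ℝ) : 0 ≤ Gfun N f x t := by
  obtain ⟨l, hl, hG⟩ := hf4
  have h := hG x t 0 ⟨le_rfl, zero_le_one⟩
  rw [zero_mul, show Gfun N f x 0 = 0 by simp [Gfun, Fprim]] at h
  exact nonneg_of_mul_nonneg_right h (by linarith)

theorem Condf2.isLittleO {N : ℕ} {f : RN N → ℝ → ℝ} (hf2 : Condf2 N f) (x : RN N) :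
    f x =o[𝓝 0] id := by
  refine Asymptotics.isLittleO_iff.2 fun c hc => ?_
  obtain ⟨δ, hδ, hsmall⟩ := hf2 c hc
  filter_upwards [Metric.closedBall_mem_nhds 0 hδ] with u hu
  simpa using hsmall x u (by simpa using hu)

theorem Fprim_nonneg_general
    (N : ℕ) (s : ℝ)
    (f : RN N → ℝ → ℝ)
    (hf1 : Condf1 N s f) (hf2 : Condf2 N f) (hf4 : Condf4 N f) :
    ∀ (x : RN N) (t : ℝ), 0 ≤ Fprim N f x t := by
  intro x t
  have hcont : Continuous (f x) := hf1.1.comp (continuous_const.prodMk continuous_id)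
  have hG : ∀ u, 2 * Fprim N f x u ≤ u * f x u := fun u => by
    have := Gfun_nonneg hf4 x u
    rw [Gfun] at this
    linarith
  exact integral_nonneg_of_two_integral_le_mul hcont hG (hf2.isLittleO x) t

/-- **Lemma (nonnegativity of `F`).** If `f` satisfies (f1), (f2) and (f4), then
`F(x,t) ≥ 0` on `ℝᴺ × ℝ`. -/
theorem Fprim_nonneg
    (N : ℕ) (s : ℝ) (hs : s ∈ Set.Ioo (0:ℝ) 1) (hN : 2 * s < (N : ℝ))
    (f : RN N → ℝ → ℝ)
    (hf1 : Condf1 N s f) (hf2 : Condf2 N f) (hf4 : Condf4 N f) :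
    ∀ (x : RN N) (t : ℝ), 0 ≤ Fprim N f x t :=
  Fprim_nonneg_general N s f hf1 hf2 hf4

end
end

section
/- Let 𝒢 : ℝ → ℝ be continuous with 𝒢(0) = 0 and let ℐ(u) = ½[u]² − ∫_{ℝ^N} 𝒢(u) dx. Suppose u ∈ H^s(ℝ^N), u ≠ 0, satisfies 𝒢(u) ∈ L¹(ℝ^N) and the Pohozaev identity ((N−2s)/2)[u]² = N ∫_{ℝ^N} 𝒢(u) dx. Then for every t > 0, with u^t(x) = u(x/t), one has ℐ(u^t) = (½ t^{N−2s} − ((N−2s)/(2N)) t^N)[u]²; consequently ℐ(u^t) ≤ ℐ(u) for all t > 0 with equality exactly at t = 1, and ℐ(u^t) → −∞ as t → +∞. -/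
open MeasureTheory Real Filter Topology
open scoped ENNReal

noncomputable section

/-- The autonomous functional `ℐ(u) = ½[u]² - ∫ 𝒢(u) dx`. -/
def Ifun (N : ℕ) (s : ℝ) (G : ℝ → ℝ) (u : RN N → ℝ) : ℝ :=
  (1/2) * gagSq N s u - ∫ x : RN N, G (u x)

/-! Both terms of `ℐ` are homogeneous under the dilation `u ↦ u^t`: the change of variables
`x ↦ t x` (on `ℝ^N × ℝ^N` for the double integral) gives `[u^t]² = t^{N-2s} [u]²` and
`∫ 𝒢(u^t) = t^N ∫ 𝒢(u)`. The Pohozaev identity eliminates `∫ 𝒢(u)`, leaving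
`ℐ(u^t) = (a/2) [u]² (t^a/a - t^N/N)` with `a = N - 2s`; by Bernoulli's inequality for
`t^N = (t^a)^{N/a}` this profile has its strict maximum at `t = 1`. Finally `[u]² > 0`, since a
function with vanishing Gagliardo seminorm is a.e. constant and the only constant in
`L²(ℝ^N)` is `0`. -/

lemma gagSq_comp_inv_smul (N : ℕ) (s : ℝ) (u : RN N → ℝ) {t : ℝ} (ht : 0 < t) :
    gagSq N s (fun x => u (t⁻¹ • x)) = t ^ ((N : ℝ) - 2 * s) * gagSq N s u := by
  set c : ℝ := (N : ℝ) + 2 * s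
  set g : RN N × RN N → ℝ := fun p => (u p.1 - u p.2) ^ 2 / ‖p.1 - p.2‖ ^ c
  have hg (p : RN N × RN N) : (u (t⁻¹ • p.1) - u (t⁻¹ • p.2)) ^ 2 / ‖p.1 - p.2‖ ^ c
      = t ^ (-c) * g (t⁻¹ • p) := by
    have : ‖p.1 - p.2‖ = t * ‖t⁻¹ • p.1 - t⁻¹ • p.2‖ := by
      rw [← smul_sub, norm_smul, norm_inv, Real.norm_of_nonneg ht.le,
        mul_inv_cancel_left₀ ht.ne']
    rw [this, Real.mul_rpow ht.le (norm_nonneg _), Real.rpow_neg ht.le]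
    simp only [g, Prod.smul_fst, Prod.smul_snd]
    field_simp
  calc gagSq N s (fun x => u (t⁻¹ • x))
      = ∫ p : RN N × RN N, t ^ (-c) * g (t⁻¹ • p) := integral_congr_ae (.of_forall hg)
    _ = t ^ (-c) * t ^ ((N + N : ℕ) : ℝ) * gagSq N s u := by
      rw [integral_const_mul, Measure.volume_eq_prod,
        Measure.integral_comp_inv_smul_of_nonneg _ _ ht.le, Module.finrank_prod,
        finrank_euclideanSpace_fin, smul_eq_mul, Real.rpow_natCast, mul_assoc]
      rfl
    _ = t ^ ((N : ℝ) - 2 * s) * gagSq N s u := by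
      rw [← Real.rpow_add ht]
      congr 2
      push_cast
      ring

lemma Ifun_comp_inv_smul (N : ℕ) (s : ℝ) (G : ℝ → ℝ) (u : RN N → ℝ) {t : ℝ}
    (ht : 0 < t) :
    Ifun N s G (fun x => u (t⁻¹ • x)) =
      (1/2) * t ^ ((N : ℝ) - 2 * s) * gagSq N s u - t ^ (N : ℝ) * ∫ x, G (u x) := by
  rw [Ifun, gagSq_comp_inv_smul N s u ht,
    Measure.integral_comp_inv_smul_of_nonneg volume (fun x => G (u x)) ht.le,
    finrank_euclideanSpace_fin, smul_eq_mul, Real.rpow_natCast]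
  ring

lemma ae_eq_const_of_ae_prod {α β : Type*} [MeasurableSpace α] {μ : Measure α} [SFinite μ]
    [NullSingletonClass μ] [NeZero μ] {u : α → β}
    (h : ∀ᵐ p ∂μ.prod μ, p.1 ≠ p.2 → u p.1 = u p.2) : ∃ c, u =ᵐ[μ] fun _ => c := by
  have : (ae μ).NeBot := ae_neBot.2 (NeZero.ne μ)
  obtain ⟨x, hx⟩ := (Measure.ae_ae_of_ae_prod h).exists
  exact ⟨u x, by filter_upwards [hx, Measure.ae_ne μ x] with y hy hyx using (hy hyx.symm).symm⟩

lemma integrable_gagSq_integrand {N : ℕ} {s : ℝ} {u : RN N → ℝ} (hu : inHs N s u) :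
    Integrable fun p : RN N × RN N =>
      (u p.1 - u p.2) ^ 2 / ‖p.1 - p.2‖ ^ ((N : ℝ) + 2 * s) := by
  have hum := hu.1.aestronglyMeasurable.aemeasurable
  refine ⟨?_, ?_⟩
  · rw [Measure.volume_eq_prod]
    exact (((hum.comp_fst.sub hum.comp_snd).pow_const 2).div
      ((measurable_fst.sub measurable_snd).norm.pow_const _).aemeasurable).aestronglyMeasurable
  · rw [hasFiniteIntegral_iff_ofReal (.of_forall fun p => by positivity)]
    exact hu.2

lemma nontrivial_RN {N : ℕ} (hN : 0 < N) : Nontrivial (RN N) :=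
  Module.nontrivial_of_finrank_pos (R := ℝ) (by simpa using hN)

lemma ae_eq_const_of_gagSq_eq_zero {N : ℕ} (hN : 0 < N) {s : ℝ} {u : RN N → ℝ}
    (hu : inHs N s u) (h : gagSq N s u = 0) : ∃ c, u =ᵐ[volume] fun _ => c := by
  have := nontrivial_RN hN
  have hzero := (integral_eq_zero_iff_of_nonneg (fun p => by positivity)
    (integrable_gagSq_integrand hu)).1 h
  rw [Measure.volume_eq_prod] at hzero
  refine ae_eq_const_of_ae_prod ?_
  filter_upwards [hzero] with p hp hne
  have hden : ‖p.1 - p.2‖ ^ ((N : ℝ) + 2 * s) ≠ 0 :=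
    (Real.rpow_pos_of_pos (norm_pos_iff.2 (sub_ne_zero.2 hne)) _).ne'
  simpa [hden, sub_eq_zero] using hp

lemma gagSq_pos {N : ℕ} (hN : 0 < N) {s : ℝ} {u : RN N → ℝ} (hu : inHs N s u)
    (hne : Nontriv N u) : 0 < gagSq N s u := by
  have := nontrivial_RN hN
  refine (integral_nonneg fun p => by positivity).lt_of_ne' fun h => ?_
  obtain ⟨c, hc⟩ := ae_eq_const_of_gagSq_eq_zero hN hu h
  have hc0 : c = 0 := by
    simpa [measure_univ_of_isAddLeftInvariant] using
      (memLp_const_iff two_ne_zero ENNReal.ofNat_ne_top).1 (hu.1.ae_eq hc)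
  exact hne (hc0 ▸ hc)

lemma rpow_div_sub_rpow_div_lt {a b t : ℝ} (ha : 0 < a) (hab : a < b) (ht : 0 < t)
    (ht1 : t ≠ 1) :
    t ^ a / a - t ^ b / b < 1 / a - 1 / b := by
  have hb : 0 < b := ha.trans hab
  have hy : t ^ a ≠ 1 := by
    rcases ht1.lt_or_gt with h | h
    · exact (Real.rpow_lt_one ht.le h ha).ne
    · exact (Real.one_lt_rpow h ha).ne'
  have hber := one_add_mul_self_lt_rpow_one_add (s := t ^ a - 1)
    (by linarith [Real.rpow_pos_of_pos ht a]) (sub_ne_zero.2 hy) ((one_lt_div ha).2 hab)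
  rw [add_sub_cancel, ← Real.rpow_mul ht.le, mul_div_cancel₀ _ ha.ne'] at hber
  rw [div_sub_div _ _ ha.ne' hb.ne', div_sub_div _ _ ha.ne' hb.ne',
    div_lt_div_iff_of_pos_right (by positivity)]
  have key : a + b * (t ^ a - 1) < a * t ^ b := by
    have := mul_lt_mul_of_pos_left hber ha
    rwa [mul_add, mul_one, ← mul_assoc, mul_div_cancel₀ _ ha.ne'] at this
  linarith

lemma tendsto_rpow_div_sub_rpow_div_atBot {a b : ℝ} (ha : 0 < a) (hab : a < b) :
    Tendsto (fun t : ℝ => t ^ a / a - t ^ b / b) atTop atBot := by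
  have hb : 0 < b := ha.trans hab
  have hlead : Tendsto (fun t : ℝ => (1 / a - t ^ (b - a) / b)) atTop atBot :=
    tendsto_atBot_add_const_left _ _ (tendsto_neg_atTop_atBot.comp
      ((tendsto_rpow_atTop (by linarith)).atTop_div_const hb))
  refine ((tendsto_rpow_atTop ha).atTop_mul_atBot₀ hlead).congr' ?_
  filter_upwards [eventually_gt_atTop 0] with t ht
  rw [mul_sub, Real.rpow_sub ht]
  field_simp

lemma Ifun_comp_inv_smul_of_pohozaev {N : ℕ} (hN : 0 < N) {s : ℝ} {G : ℝ → ℝ}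
    {u : RN N → ℝ}
    (hpoh : (((N : ℝ) - 2 * s) / 2) * gagSq N s u = (N : ℝ) * ∫ x : RN N, G (u x))
    {t : ℝ} (ht : 0 < t) :
    Ifun N s G (fun x => u (t⁻¹ • x)) =
      ((1/2) * t ^ ((N : ℝ) - 2 * s) - (((N : ℝ) - 2 * s) / (2 * N)) * t ^ (N : ℝ)) *
        gagSq N s u := by
  have hN' : (N : ℝ) ≠ 0 := by positivity
  have hG : ∫ x, G (u x) = ((N : ℝ) - 2 * s) / (2 * N) * gagSq N s u := by
    field_simp
    linarith
  rw [Ifun_comp_inv_smul N s G u ht, hG]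
  ring

theorem pohozaev_fibering_general
    (N : ℕ) (s : ℝ) (hs : s ∈ Set.Ioo (0:ℝ) 1) (hN : 2 * s < (N : ℝ))
    (G : ℝ → ℝ)
    (u : RN N → ℝ) (hu : inHs N s u) (hne : Nontriv N u)
    (hpoh : (((N : ℝ) - 2 * s) / 2) * gagSq N s u = (N : ℝ) * ∫ x : RN N, G (u x)) :
    (∀ t : ℝ, 0 < t →
      Ifun N s G (fun x => u (t⁻¹ • x)) =
        ((1/2) * t ^ ((N : ℝ) - 2 * s) - (((N : ℝ) - 2 * s) / (2 * N)) * t ^ (N : ℝ)) *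
          gagSq N s u ∧
      Ifun N s G (fun x => u (t⁻¹ • x)) ≤ Ifun N s G u ∧
      (Ifun N s G (fun x => u (t⁻¹ • x)) = Ifun N s G u ↔ t = 1)) ∧
    Tendsto (fun t : ℝ => Ifun N s G (fun x => u (t⁻¹ • x))) atTop atBot := by
  have hNpos : (0 : ℝ) < N := by linarith [hs.1]
  set a : ℝ := (N : ℝ) - 2 * s
  have ha : 0 < a := sub_pos.2 hN
  have haN : a < N := by linarith [hs.1]
  have hc : 0 < a / 2 * gagSq N s u := by
    have := gagSq_pos (by exact_mod_cast hNpos) hu hne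
    positivity
  have hI (t : ℝ) (ht : 0 < t) : Ifun N s G (fun x => u (t⁻¹ • x)) =
      ((1/2) * t ^ a - (a / (2 * N)) * t ^ (N : ℝ)) * gagSq N s u :=
    Ifun_comp_inv_smul_of_pohozaev (by exact_mod_cast hNpos) hpoh ht
  have hprofile (t : ℝ) : ((1/2) * t ^ a - (a / (2 * N)) * t ^ (N : ℝ)) * gagSq N s u =
      (a / 2 * gagSq N s u) * (t ^ a / a - t ^ (N : ℝ) / N) := by
    field_simp
  have hIu : Ifun N s G u = (a / 2 * gagSq N s u) * (1 / a - 1 / N) := by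
    have h1 := hI 1 one_pos
    simp only [inv_one, one_smul] at h1
    rw [h1, hprofile, Real.one_rpow, Real.one_rpow]
  have hlt (t : ℝ) (ht : 0 < t) (ht1 : t ≠ 1) :
      Ifun N s G (fun x => u (t⁻¹ • x)) < Ifun N s G u := by
    rw [hI t ht, hprofile, hIu]
    exact mul_lt_mul_of_pos_left (rpow_div_sub_rpow_div_lt ha haN ht ht1) hc
  refine ⟨fun t ht => ⟨hI t ht, ?_, fun h => by_contra fun ht1 => (hlt t ht ht1).ne h,
    by rintro rfl; simp⟩, ?_⟩
  · exact (eq_or_ne t 1).elim (fun h => by simp [h]) fun ht1 => (hlt t ht ht1).le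
  · refine ((tendsto_rpow_div_sub_rpow_div_atBot ha haN).const_mul_atBot hc).congr' ?_
    filter_upwards [eventually_gt_atTop 0] with t ht
    rw [hI t ht, hprofile]

/-- If `u ≠ 0` satisfies the Pohozaev identity, then for `u^t(x) = u(x/t)` one has
`ℐ(u^t) = (½ t^{N-2s} - ((N-2s)/(2N)) t^N)[u]²`, so `ℐ(u^t) ≤ ℐ(u)` with equality
exactly at `t = 1`, and `ℐ(u^t) → -∞` as `t → ∞`. -/
theorem pohozaev_fibering
    (N : ℕ) (s : ℝ) (hs : s ∈ Set.Ioo (0:ℝ) 1) (hN : 2 * s < (N : ℝ))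
    (G : ℝ → ℝ) (hG : Continuous G) (hG0 : G 0 = 0)
    (u : RN N → ℝ) (hu : inHs N s u) (hne : Nontriv N u)
    (hint : Integrable (fun x : RN N => G (u x)) volume)
    (hpoh : (((N : ℝ) - 2 * s) / 2) * gagSq N s u = (N : ℝ) * ∫ x : RN N, G (u x)) :
    (∀ t : ℝ, 0 < t →
      Ifun N s G (fun x => u (t⁻¹ • x)) =
        ((1/2) * t ^ ((N : ℝ) - 2 * s) - (((N : ℝ) - 2 * s) / (2 * N)) * t ^ (N : ℝ)) *
          gagSq N s u ∧
      Ifun N s G (fun x => u (t⁻¹ • x)) ≤ Ifun N s G u ∧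
      (Ifun N s G (fun x => u (t⁻¹ • x)) = Ifun N s G u ↔ t = 1)) ∧
    Tendsto (fun t : ℝ => Ifun N s G (fun x => u (t⁻¹ • x))) atTop atBot :=
  pohozaev_fibering_general N s hs hN G u hu hne hpoh

end
end
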